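/- Let H, K be complex inner product spaces with dim H ≥ 2 and let A : H → K be a nonzero additive mapping with dense image preserving orthogonality. Then there exists γ > 0 such that ‖A(x)‖ = γ‖x‖ for all x ∈ H. -/

import Mathlib

/-!
Write `N x = ‖A x‖ ^ 2`. It is additive on orthogonal pairs, and since `x + y ⊥ x - y` when
`x ⊥ y` and `‖x‖ = ‖y‖`, it takes equal values on such pairs; using a second orthogonal direction
(dimension ≥ 2) this gives `N (c • x) = N (c' • x)` whenever `‖c‖ = ‖c'‖`. Pythagoras for
`p • x + q • y ⊥ q • x + p • y` (where `re (conj p * q) = 0`) gives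
`N ((p + q) • x) = N (p • x) + N (q • x)`; with `p = t`, `q = i √(1 - t²)` the additive map
`t ↦ A (t • x)` is bounded on `[-1, 1]`, hence continuous, hence `ℝ`-linear. So
`‖A (c • x)‖ = ‖c‖ ‖A x‖`, and splitting `y` into a multiple of `x` plus a vector orthogonal
to `x` yields `‖x‖ ‖A y‖ = ‖y‖ ‖A x‖`.
-/

open scoped InnerProductSpace ComplexConjugate

section RCLike

variable {𝕜 H K : Type*} [RCLike 𝕜] [NormedAddCommGroup H] [InnerProductSpace 𝕜 H]
  [NormedAddCommGroup K] [InnerProductSpace 𝕜 K]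

theorem exists_inner_eq_zero_and_norm_eq (hdim : 2 ≤ Module.rank 𝕜 H) (x : H) :
    ∃ y : H, ⟪x, y⟫_𝕜 = 0 ∧ ‖y‖ = ‖x‖ := by
  have hspan : (𝕜 ∙ x) ≠ ⊤ := by
    intro htop
    have : Module.rank 𝕜 H ≤ 1 := by
      rw [← rank_top 𝕜 H, ← htop]
      simpa using rank_span_le (R := 𝕜) ({x} : Set H)
    exact absurd (hdim.trans this) (by norm_num)
  obtain ⟨z, hz, hz0⟩ := (Submodule.ne_bot_iff _).1 <|
    mt Submodule.orthogonal_eq_bot_iff.1 hspan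
  refine ⟨((‖x‖ / ‖z‖ : ℝ) : 𝕜) • z, ?_, ?_⟩
  · rw [inner_smul_right, Submodule.mem_orthogonal_singleton_iff_inner_right.1 hz, mul_zero]
  · rw [norm_smul, RCLike.norm_ofReal, abs_div, abs_norm, abs_norm,
      div_mul_cancel₀ _ (norm_ne_zero_iff.2 hz0)]

theorem exists_eq_smul_add_orthogonal (x y : H) :
    ∃ (c : 𝕜) (w : H), ⟪x, w⟫_𝕜 = 0 ∧ y = c • x + w :=
  ⟨_, _, Submodule.mem_orthogonal_singleton_iff_inner_right.1
    (Submodule.sub_starProjection_mem_orthogonal y),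
    by rw [Submodule.starProjection_singleton, add_sub_cancel]⟩

variable (𝕜) in
def PreservesOrthogonality (A : H → K) : Prop :=
  ∀ x y : H, ⟪x, y⟫_𝕜 = 0 → ⟪A x, A y⟫_𝕜 = 0

namespace PreservesOrthogonality

variable {A : H →+ K}

theorem norm_map_add_sq (hA : PreservesOrthogonality 𝕜 A) {x y : H} (h : ⟪x, y⟫_𝕜 = 0) :
    ‖A (x + y)‖ ^ 2 = ‖A x‖ ^ 2 + ‖A y‖ ^ 2 := by
  rw [map_add, sq, sq, sq, norm_add_sq_eq_norm_sq_add_norm_sq_of_inner_eq_zero _ _ (hA x y h)]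

theorem norm_map_eq_of_inner_eq_zero (hA : PreservesOrthogonality 𝕜 A) {x y : H}
    (h : ⟪x, y⟫_𝕜 = 0) (hn : ‖x‖ = ‖y‖) : ‖A x‖ = ‖A y‖ := by
  have hyx : ⟪y, x⟫_𝕜 = 0 := inner_eq_zero_symm.1 h
  have hsum : ⟪x + y, x - y⟫_𝕜 = 0 := by
    rw [inner_add_left, inner_sub_right, inner_sub_right, h, hyx,
      inner_self_eq_norm_sq_to_K, inner_self_eq_norm_sq_to_K, hn]
    ring
  have himage := hA _ _ hsum
  rw [map_add, map_sub, inner_add_left, inner_sub_right, inner_sub_right, hA x y h, hA y x hyx,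
    inner_self_eq_norm_sq_to_K, inner_self_eq_norm_sq_to_K] at himage
  have hsq : ((‖A x‖ ^ 2 : ℝ) : 𝕜) = ((‖A y‖ ^ 2 : ℝ) : 𝕜) := by
    push_cast
    linear_combination himage
  exact (pow_left_inj₀ (norm_nonneg _) (norm_nonneg _) two_ne_zero).1 (RCLike.ofReal_inj.1 hsq)

theorem norm_map_smul_eq_of_norm_eq (hA : PreservesOrthogonality 𝕜 A)
    (hdim : 2 ≤ Module.rank 𝕜 H) {c c' : 𝕜} (hc : ‖c‖ = ‖c'‖) (x : H) :
    ‖A (c • x)‖ = ‖A (c' • x)‖ := by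
  obtain ⟨y, hxy, hyx⟩ := exists_inner_eq_zero_and_norm_eq hdim x
  have horth (a b : 𝕜) : ⟪a • x, b • y⟫_𝕜 = 0 := by
    rw [inner_smul_left, inner_smul_right, hxy, mul_zero, mul_zero]
  calc ‖A (c • x)‖ = ‖A (c' • y)‖ :=
        hA.norm_map_eq_of_inner_eq_zero (horth c c') (by rw [norm_smul, norm_smul, hc, hyx])
    _ = ‖A (c' • x)‖ :=
        (hA.norm_map_eq_of_inner_eq_zero (horth c' c') (by rw [norm_smul, norm_smul, hyx])).symm

theorem norm_map_add_smul_sq (hA : PreservesOrthogonality 𝕜 A) (hdim : 2 ≤ Module.rank 𝕜 H)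
    {p q : 𝕜} (hpq : RCLike.re (conj p * q) = 0) (x : H) :
    ‖A ((p + q) • x)‖ ^ 2 = ‖A (p • x)‖ ^ 2 + ‖A (q • x)‖ ^ 2 := by
  obtain ⟨y, hxy, hyx⟩ := exists_inner_eq_zero_and_norm_eq hdim x
  have hsplit (a b : 𝕜) : ‖A (a • x + b • y)‖ ^ 2 = ‖A (a • x)‖ ^ 2 + ‖A (b • x)‖ ^ 2 := by
    have horth (c d : 𝕜) : ⟪c • x, d • y⟫_𝕜 = 0 := by
      rw [inner_smul_left, inner_smul_right, hxy, mul_zero, mul_zero]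
    rw [hA.norm_map_add_sq (horth a b), hA.norm_map_eq_of_inner_eq_zero (horth b b)
      (by rw [norm_smul, norm_smul, hyx])]
  have huv : ⟪p • x + q • y, q • x + p • y⟫_𝕜 = 0 := by
    have hy : ⟪y, x⟫_𝕜 = 0 := inner_eq_zero_symm.1 hxy
    simp only [inner_add_left, inner_add_right, inner_smul_left, inner_smul_right, hxy, hy,
      inner_self_eq_norm_sq_to_K, hyx]
    have hre := RCLike.add_conj (conj p * q)
    rw [hpq, map_mul, RCLike.conj_conj, RCLike.ofReal_zero, mul_zero] at hre
    linear_combination (‖x‖ ^ 2 : 𝕜) * hre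
  have := hA.norm_map_add_sq huv
  rw [show p • x + q • y + (q • x + p • y) = (p + q) • x + (p + q) • y by module,
    hsplit, hsplit, hsplit] at this
  linarith

end PreservesOrthogonality

end RCLike

namespace PreservesOrthogonality

open Complex

variable {H K : Type*} [NormedAddCommGroup H] [InnerProductSpace ℂ H]
  [NormedAddCommGroup K] [InnerProductSpace ℂ K] {A : H →+ K}

theorem norm_map_real_smul_le (hA : PreservesOrthogonality ℂ A) (hdim : 2 ≤ Module.rank ℂ H)
    {t : ℝ} (ht : |t| ≤ 1) (x : H) : ‖A (t • x)‖ ≤ ‖A x‖ := by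
  set s := √(1 - t ^ 2)
  have hunit : ‖(t : ℂ) + s * I‖ = ‖(1 : ℂ)‖ := by
    rw [norm_add_mul_I, Real.sq_sqrt (by linarith [(sq_le_one_iff_abs_le_one t).2 ht]),
      add_sub_cancel, Real.sqrt_one, norm_one]
  have hre : RCLike.re (conj (t : ℂ) * (s * I)) = 0 := by simp
  have hsplit := hA.norm_map_add_smul_sq hdim hre x
  rw [hA.norm_map_smul_eq_of_norm_eq hdim hunit, one_smul, coe_smul] at hsplit
  refine (pow_le_pow_iff_left₀ (norm_nonneg _) (norm_nonneg _) two_ne_zero).1 ?_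
  linarith [sq_nonneg ‖A ((s * I) • x)‖]

theorem map_real_smul (hA : PreservesOrthogonality ℂ A) (hdim : 2 ≤ Module.rank ℂ H)
    (t : ℝ) (x : H) : A (t • x) = t • A x := by
  let g : ℝ →+ K := AddMonoidHom.mk' (fun t => A (t • x)) fun s t => by rw [add_smul, map_add]
  have hbdd : Bornology.IsBounded (g '' Metric.closedBall 0 1) := by
    refine isBounded_iff_forall_norm_le.2 ⟨‖A x‖, ?_⟩
    rintro _ ⟨t, ht, rfl⟩
    exact hA.norm_map_real_smul_le hdim (by simpa using ht) x
  have hcont := g.continuous_of_isBounded_nhds_zero (Metric.closedBall_mem_nhds 0 one_pos) hbdd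
  simpa [g] using _root_.map_real_smul g hcont t 1

theorem norm_map_smul (hA : PreservesOrthogonality ℂ A) (hdim : 2 ≤ Module.rank ℂ H)
    (c : ℂ) (x : H) : ‖A (c • x)‖ = ‖c‖ * ‖A x‖ := by
  rw [hA.norm_map_smul_eq_of_norm_eq hdim (c' := (‖c‖ : ℂ)) (by simp), coe_smul,
    hA.map_real_smul hdim, norm_smul, Real.norm_eq_abs, abs_norm]

theorem norm_mul_norm_map_comm (hA : PreservesOrthogonality ℂ A) (hdim : 2 ≤ Module.rank ℂ H)
    (x y : H) : ‖x‖ * ‖A y‖ = ‖y‖ * ‖A x‖ := by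
  obtain ⟨c, w, hxw, rfl⟩ := exists_eq_smul_add_orthogonal (𝕜 := ℂ) x y
  have hcw : ⟪c • x, w⟫_ℂ = 0 := by rw [inner_smul_left, hxw, mul_zero]
  have hw : ‖x‖ * ‖A w‖ = ‖w‖ * ‖A x‖ := by
    have := hA.norm_map_eq_of_inner_eq_zero (x := (‖w‖ : ℂ) • x) (y := (‖x‖ : ℂ) • w)
      (by rw [inner_smul_left, inner_smul_right, hxw, mul_zero, mul_zero])
      (by simp [norm_smul, mul_comm])
    rwa [hA.norm_map_smul hdim, hA.norm_map_smul hdim, norm_real, norm_real, norm_norm,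
      norm_norm, eq_comm] at this
  have hy : ‖c • x + w‖ ^ 2 = ‖c‖ ^ 2 * ‖x‖ ^ 2 + ‖w‖ ^ 2 := by
    rw [sq, sq, norm_add_sq_eq_norm_sq_add_norm_sq_of_inner_eq_zero _ _ hcw, norm_smul]
    ring
  have hAy : ‖A (c • x + w)‖ ^ 2 = ‖c‖ ^ 2 * ‖A x‖ ^ 2 + ‖A w‖ ^ 2 := by
    rw [hA.norm_map_add_sq hcw, hA.norm_map_smul hdim, mul_pow]
  refine (pow_left_inj₀ (by positivity) (by positivity) two_ne_zero).1 ?_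
  calc (‖x‖ * ‖A (c • x + w)‖) ^ 2 = ‖c‖ ^ 2 * ‖x‖ ^ 2 * ‖A x‖ ^ 2 + (‖x‖ * ‖A w‖) ^ 2 := by
        rw [mul_pow, hAy]; ring
    _ = (‖c • x + w‖ * ‖A x‖) ^ 2 := by rw [hw, mul_pow ‖c • x + w‖, hy]; ring

end PreservesOrthogonality

theorem stmt_4_general {H K : Type*} [NormedAddCommGroup H] [InnerProductSpace ℂ H]
    [NormedAddCommGroup K] [InnerProductSpace ℂ K]
    (hdim : 2 ≤ Module.rank ℂ H)
    (A : H → K) (hA : A ≠ 0)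
    (hadd : ∀ x y, A (x + y) = A x + A y)
    (horth : ∀ x y : H, (inner ℂ x y : ℂ) = 0 → (inner ℂ (A x) (A y) : ℂ) = 0) :
    ∃ γ : ℝ, 0 < γ ∧ ∀ x : H, ‖A x‖ = γ * ‖x‖ := by
  let A' : H →+ K := AddMonoidHom.mk' A hadd
  have hA' : PreservesOrthogonality ℂ A' := horth
  obtain ⟨x₀, hx₀⟩ : ∃ x₀, A x₀ ≠ 0 := by
    by_contra! h
    exact hA (funext h)
  have hx₀0 : x₀ ≠ 0 := by
    rintro rfl
    exact hx₀ (map_zero A')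
  refine ⟨‖A x₀‖ / ‖x₀‖, by positivity, fun x => ?_⟩
  have hx : ‖x₀‖ * ‖A x‖ = ‖x‖ * ‖A x₀‖ := hA'.norm_mul_norm_map_comm hdim x₀ x
  field_simp
  linarith

theorem stmt_4 {H K : Type*} [NormedAddCommGroup H] [InnerProductSpace ℂ H]
    [NormedAddCommGroup K] [InnerProductSpace ℂ K]
    (hdim : 2 ≤ Module.rank ℂ H)
    (A : H → K) (hA : A ≠ 0)
    (hadd : ∀ x y, A (x + y) = A x + A y)
    (hdense : DenseRange A)
    (horth : ∀ x y : H, (inner ℂ x y : ℂ) = 0 → (inner ℂ (A x) (A y) : ℂ) = 0) :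
    ∃ γ : ℝ, 0 < γ ∧ ∀ x : H, ‖A x‖ = γ * ‖x‖ :=
  stmt_4_general hdim A hA hadd horth
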